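/- arXiv:2405.19051 — 3 statements merged into one kernel-verified Lean document; each statement's English description precedes it below -/
import Mathlib

section
/- Under the Hilbert space isomorphism Γ: (ℂ²)^⊗n → Λ(ℂψ₁ ⊕ ⋯ ⊕ ℂψₙ) sending |a₁⋯aₙ⟩ to ψ₁^{a₁} ∧ ⋯ ∧ ψₙ^{aₙ} (where ψ⁰ = 1, ψ¹ = ψ), the following operator identities hold for 1 ≤ i ≤ n: ψᵢ + ψᵢ* = Z₁⋯Z_{i−1}Xᵢ, ψᵢ*ψᵢ − ψᵢψᵢ* = Zᵢ, and ψᵢ − ψᵢ* = −Z₁⋯ZᵢXᵢ. -/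
open Matrix

/-- Basis index for the exterior algebra `Λ(ℂψ₁ ⊕ ⋯ ⊕ ℂψₙ)`: a subset `S ⊆ {1,…,n}`
indexes the wedge product of the `ψᵢ` for `i ∈ S` in increasing order. -/
abbrev ExtIdx (n : ℕ) := Finset (Fin n)

/-- The Koszul sign `(-1)^{|{j ∈ S : j < i}|}`. -/
noncomputable def ksgn (n : ℕ) (i : Fin n) (S : ExtIdx n) : ℂ :=
  (-1 : ℂ) ^ (S.filter (fun j => j < i)).card

/-- The wedge (creation) operator `ψᵢ ∧ (−)` in the orthonormal wedge basis. -/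
noncomputable def wedgeOp (n : ℕ) (i : Fin n) : Matrix (ExtIdx n) (ExtIdx n) ℂ :=
  fun S T => if i ∈ S ∧ T = S.erase i then ksgn n i T else 0

/-- The contraction (annihilation) operator `(ψᵢ)* ⌟ (−)` in the orthonormal wedge basis. -/
noncomputable def contrOp (n : ℕ) (i : Fin n) : Matrix (ExtIdx n) (ExtIdx n) ℂ :=
  fun S T => if i ∉ S ∧ T = insert i S then ksgn n i S else 0

/-- The state space of `n` qubits: functions from qubit indices to basis labels. -/
abbrev QIdx (n : ℕ) := Fin n → Fin 2

/-- The Pauli X operator acting on the `i`-th qubit of `(ℂ²)^⊗n`. -/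
noncomputable def Xop (n : ℕ) (i : Fin n) : Matrix (QIdx n) (QIdx n) ℂ :=
  fun a b => if b = Function.update a i (a i + 1) then 1 else 0

/-- The Pauli Z operator acting on the `i`-th qubit of `(ℂ²)^⊗n`. -/
noncomputable def Zop (n : ℕ) (i : Fin n) : Matrix (QIdx n) (QIdx n) ℂ :=
  fun a b => if a = b then (-1 : ℂ) ^ (a i : ℕ) else 0

/-- `|+⟩` and `|−⟩` as states of a single tensor factor: `pm 0 = |+⟩`, `pm 1 = |−⟩`. -/
noncomputable def pm (s : Fin 2) (x : Fin 2) : ℂ :=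
  (Real.sqrt 2 : ℂ)⁻¹ * (-1 : ℂ) ^ ((s : ℕ) * (x : ℕ))

/-- The product state `|s₁ ⋯ sₙ⟩` with each `sᵢ ∈ {+,−}`. -/
noncomputable def pmKet (n : ℕ) (s : Fin n → Fin 2) : QIdx n → ℂ :=
  fun a => ∏ i, pm (s i) (a i)

/-- The Jordan–Wigner identification on basis indices: a bit string `a` corresponds to
the subset `{i : a i = 1}`, i.e. `Γ|a₁⋯aₙ⟩ = ψ₁^{a₁} ∧ ⋯ ∧ ψₙ^{aₙ}`. -/
noncomputable def jw (n : ℕ) (a : QIdx n) : ExtIdx n :=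
  Finset.univ.filter (fun i => a i = 1)

/-- The product `Z₁ ⋯ Z_k` of Pauli Z operators on the qubits `j` with `(j : ℕ) < k`. -/
noncomputable def Zpre (n : ℕ) (k : ℕ) : Matrix (QIdx n) (QIdx n) ℂ :=
  (((List.finRange n).filter (fun j : Fin n => (j : ℕ) < k)).map (Zop n)).prod

/-!
Under `Γ` all operators involved are monomial matrices. `ψᵢ` and `ψᵢ*` send `|a⟩` to the basis
vector with bit `i` flipped (when `aᵢ = 1`, resp. `aᵢ = 0`), with the Koszul sign
`(-1)^{#{j < i : aⱼ = 1}}`, and this sign is the eigenvalue of `Z₁ ⋯ Z_{i-1}` on `|a⟩`. Hence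
`ψᵢ ± ψᵢ*` are diagonal sign matrices times `Xᵢ`, while `ψᵢ*ψᵢ` and `ψᵢψᵢ*` are the projections
onto `aᵢ = 0` and `aᵢ = 1`.
-/

lemma mem_jw {n : ℕ} {a : QIdx n} {i : Fin n} : i ∈ jw n a ↔ a i = 1 := by
  simp [jw]

lemma jw_injective (n : ℕ) : Function.Injective (jw n) := by
  intro a b h
  funext j
  have hj : a j = 1 ↔ b j = 1 := by rw [← mem_jw, ← mem_jw, h]
  omega

lemma jw_update_zero {n : ℕ} (a : QIdx n) (i : Fin n) :
    jw n (Function.update a i 0) = (jw n a).erase i := by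
  ext j
  by_cases h : j = i <;> simp [jw, Function.update, h]

lemma jw_update_one {n : ℕ} (a : QIdx n) (i : Fin n) :
    jw n (Function.update a i 1) = insert i (jw n a) := by
  ext j
  by_cases h : j = i <;> simp [jw, Function.update, h]

lemma and_jw_eq_erase_iff {n : ℕ} {a b : QIdx n} {i : Fin n} :
    (i ∈ jw n a ∧ jw n b = (jw n a).erase i) ↔
      (a i = 1 ∧ b = Function.update a i (a i + 1)) := by
  rw [mem_jw]
  refine and_congr_right fun h => ?_
  rw [h, ← jw_update_zero, (jw_injective n).eq_iff]
  rfl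

lemma and_jw_eq_insert_iff {n : ℕ} {a b : QIdx n} {i : Fin n} :
    (i ∉ jw n a ∧ jw n b = insert i (jw n a)) ↔
      (a i = 0 ∧ b = Function.update a i (a i + 1)) := by
  have : ¬a i = 1 ↔ a i = 0 := by omega
  rw [mem_jw, this]
  refine and_congr_right fun h => ?_
  rw [h, ← jw_update_one, (jw_injective n).eq_iff]
  rfl

/-- The eigenvalue `∏_{j < k} (-1)^{a_j}` of `Z₁ ⋯ Z_k` on the basis state `|a⟩`. -/
noncomputable def zpreSign (n k : ℕ) (a : QIdx n) : ℂ :=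
  ∏ j ∈ Finset.univ.filter (fun j : Fin n => (j : ℕ) < k), (-1) ^ (a j : ℕ)

lemma Zop_eq_diagonal (n : ℕ) (j : Fin n) :
    Zop n j = diagonal fun a => (-1 : ℂ) ^ (a j : ℕ) := by
  ext a b
  simp [Zop, diagonal]

lemma Zpre_eq_diagonal (n k : ℕ) : Zpre n k = diagonal (zpreSign n k) := by
  have hZ : Zop n = diagonalRingHom (QIdx n) ℂ ∘ fun j a => (-1) ^ (a j : ℕ) :=
    funext (Zop_eq_diagonal n)
  rw [Zpre, hZ, ← List.map_map, ← map_list_prod,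
    ← List.prod_toFinset _ ((List.nodup_finRange n).filter _)]
  refine congrArg diagonal (funext fun a => ?_)
  simp [zpreSign, Finset.prod_apply, List.toFinset_filter]

lemma zpreSign_succ (n : ℕ) (i : Fin n) (a : QIdx n) :
    zpreSign n (i + 1) a = zpreSign n i a * (-1) ^ (a i : ℕ) := by
  have hfilter : Finset.univ.filter (fun j : Fin n => (j : ℕ) < i + 1) =
      insert i (Finset.univ.filter fun j : Fin n => (j : ℕ) < i) := by
    ext j
    simp only [Finset.mem_filter, Finset.mem_univ, true_and, Finset.mem_insert, Fin.ext_iff]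
    omega
  rw [zpreSign, hfilter, Finset.prod_insert (by simp), mul_comm, zpreSign]

lemma neg_one_pow_fin_two {R : Type*} [Monoid R] [HasDistribNeg R] (x : Fin 2) :
    (-1 : R) ^ (x : ℕ) = if x = 1 then -1 else 1 := by
  fin_cases x <;> simp

lemma ksgn_jw (n : ℕ) (i : Fin n) (a : QIdx n) : ksgn n i (jw n a) = zpreSign n i a := by
  have hfilter : (jw n a).filter (· < i) =
      (Finset.univ.filter fun j : Fin n => (j : ℕ) < i).filter (a · = 1) := by
    ext j
    simp only [jw, Finset.mem_filter, Finset.mem_univ, true_and, Fin.lt_def]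
    tauto
  simp only [ksgn, zpreSign, hfilter, ← Finset.prod_const, Finset.prod_filter (a · = 1),
    neg_one_pow_fin_two]

lemma ksgn_erase (n : ℕ) (i : Fin n) (S : ExtIdx n) : ksgn n i (S.erase i) = ksgn n i S := by
  rw [ksgn, Finset.filter_erase, Finset.erase_eq_of_notMem (by simp), ksgn]

lemma ksgn_mul_self (n : ℕ) (i : Fin n) (S : ExtIdx n) : ksgn n i S * ksgn n i S = 1 := by
  rw [ksgn, ← pow_add, Even.neg_one_pow ⟨_, rfl⟩]

lemma submatrix_jw_wedgeOp (n : ℕ) (i : Fin n) :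
    (wedgeOp n i).submatrix (jw n) (jw n) =
      diagonal (fun a => if a i = 1 then zpreSign n i a else 0) * Xop n i := by
  ext a b
  rw [submatrix_apply, diagonal_mul, Xop, ite_zero_mul_ite_zero, mul_one, wedgeOp]
  refine ite_congr (propext and_jw_eq_erase_iff) (fun h => ?_) fun _ => rfl
  rw [(and_jw_eq_erase_iff.mpr h).2, ksgn_erase, ksgn_jw]

lemma submatrix_jw_contrOp (n : ℕ) (i : Fin n) :
    (contrOp n i).submatrix (jw n) (jw n) =
      diagonal (fun a => if a i = 0 then zpreSign n i a else 0) * Xop n i := by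
  ext a b
  rw [submatrix_apply, diagonal_mul, Xop, ite_zero_mul_ite_zero, mul_one, contrOp]
  exact ite_congr (propext and_jw_eq_insert_iff) (fun _ => ksgn_jw n i a) fun _ => rfl

lemma contrOp_mul_wedgeOp (n : ℕ) (i : Fin n) :
    contrOp n i * wedgeOp n i = diagonal fun S => if i ∈ S then 0 else 1 := by
  ext S U
  by_cases hi : i ∈ S
  · simp [mul_apply, contrOp, diagonal, hi]
  rw [mul_apply, Finset.sum_eq_single (insert i S)]
  · obtain rfl | hU := eq_or_ne U S
    · simp [contrOp, wedgeOp, hi, ksgn_mul_self]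
    · simp [contrOp, wedgeOp, hi, hU, hU.symm]
  · intro T _ hT
    simp [contrOp, hT]
  · simp

lemma wedgeOp_mul_contrOp (n : ℕ) (i : Fin n) :
    wedgeOp n i * contrOp n i = diagonal fun S => if i ∈ S then 1 else 0 := by
  ext S U
  rw [mul_apply, Finset.sum_eq_single (S.erase i)]
  · by_cases hi : i ∈ S <;> simp [contrOp, wedgeOp, diagonal, hi, ksgn_mul_self, eq_comm]
  · intro T _ hT
    simp [wedgeOp, hT]
  · simp

theorem jordan_wigner (n : ℕ) (i : Fin n) :
    (wedgeOp n i + contrOp n i).submatrix (jw n) (jw n)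
        = Zpre n i * Xop n i ∧
    (contrOp n i * wedgeOp n i - wedgeOp n i * contrOp n i).submatrix (jw n) (jw n)
        = Zop n i ∧
    (wedgeOp n i - contrOp n i).submatrix (jw n) (jw n)
        = -(Zpre n (i + 1) * Xop n i) := by
  have h01 (a : QIdx n) : a i = 0 ∨ a i = 1 := by omega
  refine ⟨?_, ?_, ?_⟩
  · rw [submatrix_add, Pi.add_apply, Pi.add_apply, submatrix_jw_wedgeOp, submatrix_jw_contrOp,
      ← add_mul, diagonal_add, Zpre_eq_diagonal]
    congr 2
    funext a
    rcases h01 a with h | h <;> simp [h]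
  · rw [contrOp_mul_wedgeOp, wedgeOp_mul_contrOp, diagonal_sub,
      submatrix_diagonal _ _ (jw_injective n), Zop_eq_diagonal]
    congr 1
    funext a
    rcases h01 a with h | h <;> simp [h, mem_jw]
  · rw [submatrix_sub, Pi.sub_apply, Pi.sub_apply, submatrix_jw_wedgeOp, submatrix_jw_contrOp,
      ← sub_mul, diagonal_sub, Zpre_eq_diagonal, ← neg_mul, diagonal_neg]
    congr 2
    funext a
    rcases h01 a with h | h <;> simp [h, zpreSign_succ]
end

section
/- If S is a stabiliser subgroup of the Pauli group Gₘ generated by n independent commuting self-adjoint elements (with −1 ∉ S) acting on (ℂ²)^⊗m, then the codespace, i.e. the joint +1-eigenspace of S, has dimension 2^{m−n}. -/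
open Matrix

/-- The Pauli Y operator `Y = iXZ` acting on the `i`-th qubit. -/
noncomputable def Yop (n : ℕ) (i : Fin n) : Matrix (QIdx n) (QIdx n) ℂ :=
  Complex.I • (Xop n i * Zop n i)

/-- Generators of the Pauli group: `−1`, `i`, and the single-qubit Pauli operators. -/
noncomputable def pauliGens (n : ℕ) : Set (Matrix (QIdx n) (QIdx n) ℂ)ˣ :=
  {u | (u : Matrix (QIdx n) (QIdx n) ℂ) = -1 ∨
       (u : Matrix (QIdx n) (QIdx n) ℂ) = Complex.I • (1 : Matrix (QIdx n) (QIdx n) ℂ) ∨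
       ∃ i : Fin n, (u : Matrix (QIdx n) (QIdx n) ℂ) = Xop n i ∨
         (u : Matrix (QIdx n) (QIdx n) ℂ) = Yop n i ∨
         (u : Matrix (QIdx n) (QIdx n) ℂ) = Zop n i}

/-- The Pauli group on `n` qubits. -/
noncomputable def PauliGroup (n : ℕ) : Subgroup (Matrix (QIdx n) (QIdx n) ℂ)ˣ :=
  Subgroup.closure (pauliGens n)

/-!
The stabiliser group `S` generated by `n` independent commuting involutions is elementary abelian
of order `2 ^ n`, and the codespace is its space of invariants, whose dimension is the average
trace `|S|⁻¹ ∑_{g ∈ S} tr g`. Every Pauli operator is a scalar multiple of a Pauli string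
`X^a Z^b`, which is traceless unless `a = b = 0`; an involution that is such a scalar is `±1`.
Since `-1 ∉ S`, only `g = 1` contributes, and the dimension is `2 ^ m / 2 ^ n`.
-/

namespace Subgroup

variable {G ι : Type*} [Group G] {g : ι → G}

lemma eq_one_or_eq_of_mem_zpowers {x y : G} (hx : x * x = 1) (hy : y ∈ zpowers x) :
    y = 1 ∨ y = x := by
  obtain ⟨k, rfl⟩ := hy
  have hx2 : x ^ (2 : ℤ) = 1 := by rw [zpow_two, hx]
  rcases Int.emod_two_eq_zero_or_one k with hk | hk <;>
    simp [zpow_eq_zpow_emod k hx2, hk]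

lemma closure_range_eq_iSup_zpowers : closure (Set.range g) = ⨆ i, zpowers (g i) := by
  simp_rw [← Set.iUnion_singleton_eq_range, closure_iUnion, zpowers_eq_closure]

lemma pairwise_commute_zpowers (hcomm : ∀ i j, Commute (g i) (g j)) :
    Pairwise fun i j => ∀ x y : G, x ∈ zpowers (g i) → y ∈ zpowers (g j) → Commute x y := by
  rintro i j - _ _ ⟨a, rfl⟩ ⟨b, rfl⟩
  exact (hcomm i j).zpow_zpow a b

lemma iSupIndep_zpowers (hsq : ∀ i, g i * g i = 1)
    (hindep : ∀ i, g i ∉ closure (g '' {j | j ≠ i})) : iSupIndep fun i => zpowers (g i) := by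
  intro i
  rw [disjoint_def]
  intro x hx hx'
  refine (eq_one_or_eq_of_mem_zpowers (hsq i) hx).resolve_right ?_
  rintro rfl
  have hle : ⨆ (j) (_ : j ≠ i), zpowers (g j) ≤ closure (g '' {j | j ≠ i}) :=
    iSup₂_le fun j hj => zpowers_le.mpr (subset_closure ⟨j, hj, rfl⟩)
  exact hindep i (hle hx')

variable [Fintype ι]

lemma mul_self_eq_one_of_mem_closure_range (hcomm : ∀ i j, Commute (g i) (g j))
    (hsq : ∀ i, g i * g i = 1) {x : G} (hx : x ∈ closure (Set.range g)) :
    x * x = 1 := by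
  rw [closure_range_eq_iSup_zpowers,
    ← noncommPiCoprod_range (hcomm := pairwise_commute_zpowers hcomm)] at hx
  obtain ⟨f, rfl⟩ := hx
  rw [← map_mul, ← map_one (noncommPiCoprod (pairwise_commute_zpowers hcomm))]
  congr 1
  funext i
  ext
  rcases eq_one_or_eq_of_mem_zpowers (hsq i) (f i).2 with h | h <;> simp [h, hsq i]

theorem card_closure_range (hcomm : ∀ i j, Commute (g i) (g j)) (hsq : ∀ i, g i * g i = 1)
    (hindep : ∀ i, g i ∉ closure (g '' {j | j ≠ i})) :
    Nat.card (closure (Set.range g)) = 2 ^ Fintype.card ι := by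
  have hinj := injective_noncommPiCoprod_of_iSupIndep
    (hcomm := pairwise_commute_zpowers hcomm) (iSupIndep_zpowers hsq hindep)
  have horder (i : ι) : orderOf (g i) = 2 := by
    refine orderOf_eq_prime (by rw [sq, hsq i]) fun h => hindep i ?_
    rw [h]
    exact one_mem _
  rw [closure_range_eq_iSup_zpowers,
    ← noncommPiCoprod_range (hcomm := pairwise_commute_zpowers hcomm),
    ← Nat.card_congr (MonoidHom.ofInjective hinj).toEquiv, Nat.card_pi]
  simp [Nat.card_zpowers, horder]

end Subgroup

namespace Pauli

variable {m : ℕ}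

lemma neg_one_pow_val_add {R : Type*} [Monoid R] [HasDistribNeg R] (p q : Fin 2) :
    (-1 : R) ^ (p + q).val = (-1) ^ p.val * (-1) ^ q.val := by
  fin_cases p <;> fin_cases q <;> simp

lemma add_self_eq_zero (x : QIdx m) : x + x = 0 := by
  funext i
  simp only [Pi.add_apply, Pi.zero_apply]
  generalize x i = p
  fin_cases p <;> rfl

def signChar (b : QIdx m) : AddChar (QIdx m) ℂ where
  toFun x := (-1) ^ (b ⬝ᵥ x).val
  map_zero_eq_one' := by simp
  map_add_eq_mul' x y := by rw [dotProduct_add, neg_one_pow_val_add]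

lemma signChar_add_left (b b' x : QIdx m) :
    signChar (b + b') x = signChar b x * signChar b' x := by
  simp only [signChar, AddChar.coe_mk, add_dotProduct, neg_one_pow_val_add]

@[simp]
lemma signChar_zero (x : QIdx m) : signChar 0 x = 1 := by
  simp [signChar]

lemma signChar_mul_self (b x : QIdx m) : signChar b x * signChar b x = 1 := by
  rw [← AddChar.map_add_eq_mul, add_self_eq_zero, AddChar.map_zero_eq_one]

lemma signChar_single (b : QIdx m) (i : Fin m) :
    signChar b (Pi.single i 1) = (-1) ^ (b i).val := by
  simp [signChar, dotProduct_single]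

lemma signChar_ne_one {b : QIdx m} (hb : b ≠ 0) : signChar b ≠ 1 := by
  obtain ⟨i, hi⟩ := Function.ne_iff.mp hb
  intro h
  have h1 := DFunLike.congr_fun h (Pi.single i 1)
  rw [signChar_single, AddChar.one_apply] at h1
  generalize b i = p at hi h1
  fin_cases p
  · exact hi rfl
  · norm_num at h1

/-- The Pauli string `X^a Z^b`. -/
def pauliString (a b : QIdx m) : Matrix (QIdx m) (QIdx m) ℂ :=
  Matrix.of fun x y => if y = x + a then signChar b y else 0

lemma pauliString_zero_zero : pauliString (0 : QIdx m) 0 = 1 := by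
  ext x y
  simp [pauliString, Matrix.one_apply, eq_comm]

lemma pauliString_mul (a b a' b' : QIdx m) :
    pauliString a b * pauliString a' b' = signChar b a' • pauliString (a + a') (b + b') := by
  ext x z
  simp only [pauliString, mul_apply, of_apply, Matrix.smul_apply, smul_eq_mul, ite_mul, zero_mul,
    Finset.sum_ite_eq', Finset.mem_univ, if_true, ← add_assoc]
  split_ifs with h
  · subst h
    rw [signChar_add_left, AddChar.map_add_eq_mul (signChar b) (x + a)]
    linear_combination
      (signChar b (x + a) * signChar b' (x + a + a')) * (signChar_mul_self b a').symm
  · simp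

lemma trace_pauliString_eq_zero {a b : QIdx m} (hab : ¬(a = 0 ∧ b = 0)) :
    trace (pauliString a b) = 0 := by
  by_cases ha : a = 0
  · subst ha
    have hb : b ≠ 0 := fun hb => hab ⟨rfl, hb⟩
    simpa [trace, pauliString] using AddChar.sum_eq_zero_of_ne_one (signChar_ne_one hb)
  · refine Finset.sum_eq_zero fun x _ => ?_
    simp [pauliString, ha]

lemma Xop_eq_pauliString (i : Fin m) : Xop m i = pauliString (Pi.single i 1) 0 := by
  ext x y
  have h : Function.update x i (x i + 1) = x + Pi.single i 1 := by
    funext j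
    rcases eq_or_ne j i with rfl | hj <;> simp [*]
  simp [Xop, pauliString, h]

lemma Zop_eq_pauliString (i : Fin m) : Zop m i = pauliString 0 (Pi.single i 1) := by
  ext x y
  by_cases h : x = y
  · subst h; simp [Zop, pauliString, signChar]
  · simp [Zop, pauliString, h, Ne.symm h]

lemma Yop_eq_pauliString (i : Fin m) :
    Yop m i = Complex.I • pauliString (Pi.single i 1) (Pi.single i 1) := by
  rw [Yop, Xop_eq_pauliString, Zop_eq_pauliString, pauliString_mul]
  simp

-- The phase `c` is left unrestricted: only the support `(a, b)` matters for traces.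
def phasedPauliStrings (m : ℕ) : Subgroup (Matrix (QIdx m) (QIdx m) ℂ)ˣ where
  carrier := {u | ∃ (c : ℂ) (a b : QIdx m),
    (u : Matrix (QIdx m) (QIdx m) ℂ) = c • pauliString a b}
  one_mem' := ⟨1, 0, 0, by simp [pauliString_zero_zero]⟩
  mul_mem' := by
    rintro u v ⟨c, a, b, hu⟩ ⟨c', a', b', hv⟩
    refine ⟨c * c' * signChar b a', a + a', b + b', ?_⟩
    rw [Units.val_mul, hu, hv, smul_mul_smul_comm, pauliString_mul, smul_smul]
  inv_mem' := by
    rintro u ⟨c, a, b, hu⟩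
    have hc : c ≠ 0 := by
      rintro rfl
      exact u.ne_zero (by rw [hu, zero_smul])
    refine ⟨c⁻¹ * signChar b a, a, b, Units.inv_eq_of_mul_eq_one_right ?_⟩
    rw [hu, smul_mul_smul_comm, pauliString_mul, add_self_eq_zero, add_self_eq_zero,
      pauliString_zero_zero, smul_smul, mul_assoc, mul_assoc, signChar_mul_self, mul_one,
      mul_inv_cancel₀ hc, one_smul]

lemma pauliGroup_le_phasedPauliStrings : PauliGroup m ≤ phasedPauliStrings m := by
  rw [PauliGroup, Subgroup.closure_le]
  rintro u (h | h | ⟨i, h | h | h⟩)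
  · exact ⟨-1, 0, 0, by rw [h, pauliString_zero_zero, neg_one_smul]⟩
  · exact ⟨Complex.I, 0, 0, by rw [h, pauliString_zero_zero]⟩
  · exact ⟨1, Pi.single i 1, 0, by rw [h, Xop_eq_pauliString, one_smul]⟩
  · exact ⟨Complex.I, Pi.single i 1, Pi.single i 1, by rw [h, Yop_eq_pauliString]⟩
  · exact ⟨1, 0, Pi.single i 1, by rw [h, Zop_eq_pauliString, one_smul]⟩

theorem trace_eq_zero_of_mem_pauliGroup {u : (Matrix (QIdx m) (QIdx m) ℂ)ˣ}
    (hu : u ∈ PauliGroup m) (hsq : u * u = 1) (h1 : u ≠ 1) (hneg : u ≠ -1) :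
    trace (u : Matrix (QIdx m) (QIdx m) ℂ) = 0 := by
  obtain ⟨c, a, b, hu⟩ := pauliGroup_le_phasedPauliStrings hu
  by_cases hab : a = 0 ∧ b = 0
  · obtain ⟨rfl, rfl⟩ := hab
    rw [pauliString_zero_zero] at hu
    have hc : c * c = 1 := by
      refine smul_left_injective ℂ (one_ne_zero : (1 : Matrix (QIdx m) (QIdx m) ℂ) ≠ 0) ?_
      simpa [hu, smul_smul] using congrArg Units.val hsq
    rcases mul_self_eq_one_iff.mp hc with rfl | rfl
    · exact absurd (Units.ext (by simpa using hu)) h1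
    · exact absurd (Units.ext (by simpa using hu)) hneg
  · rw [hu, trace_smul, trace_pauliString_eq_zero hab, smul_zero]

end Pauli

section Codespace

variable {ι k : Type*} [Fintype ι] [DecidableEq ι] [Field k]

def codespace (S : Subgroup (Matrix ι ι k)ˣ) : Submodule k (ι → k) :=
  ⨅ g ∈ S, LinearMap.eqLocus (g : Matrix ι ι k).mulVecLin LinearMap.id

theorem finrank_codespace (S : Subgroup (Matrix ι ι k)ˣ) [Fintype S]
    [Invertible (Nat.card S : k)] :
    (Module.finrank k (codespace S) : k) =
      (Nat.card S : k)⁻¹ * ∑ g : S, trace (g.val : Matrix ι ι k) := by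
  let ρ : Representation k S (ι → k) :=
    (Matrix.toLinAlgEquiv' : Matrix ι ι k ≃ₐ[k] _).toMonoidHom.comp
      ((Units.coeHom _).comp S.subtype)
  have hinv : ρ.invariants = codespace S := by
    ext v
    simp [ρ, codespace, Submodule.mem_iInf]
  rw [← hinv, ← ρ.card_inv_mul_sum_char_eq_finrank]
  congr 1
  exact Finset.sum_congr rfl fun g _ => Matrix.trace_toLin'_eq _

end Codespace

lemma eq_two_pow_sub_of_mul_two_pow_eq {r m n : ℕ} (h : r * 2 ^ n = 2 ^ m) : r = 2 ^ (m - n) := by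
  have hnm : n ≤ m := (Nat.pow_dvd_pow_iff_le_right (by norm_num)).mp (Dvd.intro_left r h)
  rw [← Nat.pow_sub_mul_pow 2 hnm] at h
  exact Nat.eq_of_mul_eq_mul_right (by positivity) h

theorem stabiliser_codespace_dimension_general (m n : ℕ)
    (gens : Fin n → (Matrix (QIdx m) (QIdx m) ℂ)ˣ)
    (hpauli : ∀ i, gens i ∈ PauliGroup m)
    (hcomm : ∀ i j, gens i * gens j = gens j * gens i)
    (hsq : ∀ i, gens i * gens i = 1)
    (hneg : (-1 : (Matrix (QIdx m) (QIdx m) ℂ)ˣ) ∉ Subgroup.closure (Set.range gens))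
    (hindep : ∀ i : Fin n,
      gens i ∉ Subgroup.closure (gens '' {j | j ≠ i})) :
    Module.finrank ℂ
      ↥(⨅ g ∈ Subgroup.closure (Set.range gens),
          LinearMap.eqLocus ((g : Matrix (QIdx m) (QIdx m) ℂ)).mulVecLin LinearMap.id)
      = 2 ^ (m - n) := by
  set S := Subgroup.closure (Set.range gens)
  have hcard : Nat.card S = 2 ^ n := by
    simpa using Subgroup.card_closure_range hcomm hsq hindep
  have : Finite S := Nat.finite_of_card_ne_zero (by rw [hcard]; positivity)
  have := Fintype.ofFinite S
  have : Invertible (Nat.card S : ℂ) := invertibleOfNonzero (by simp)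
  have hpauliS : S ≤ PauliGroup m :=
    (Subgroup.closure_le _).mpr (Set.range_subset_iff.mpr hpauli)
  have htraceless (g : S) (hg : g ≠ 1) : trace (g.val : Matrix (QIdx m) (QIdx m) ℂ) = 0 :=
    Pauli.trace_eq_zero_of_mem_pauliGroup (hpauliS g.2)
      (Subgroup.mul_self_eq_one_of_mem_closure_range hcomm hsq g.2) (by simpa using hg)
      (fun h => hneg (h ▸ g.2))
  have htrace : ∑ g : S, trace (g.val : Matrix (QIdx m) (QIdx m) ℂ) = 2 ^ m := by
    rw [Fintype.sum_eq_single 1 htraceless]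
    simp [Matrix.trace_one]
  have key := finrank_codespace S
  rw [hcard, htrace, Nat.cast_pow, Nat.cast_ofNat] at key
  have hdim : (Module.finrank ℂ (codespace S) : ℂ) * 2 ^ n = 2 ^ m := by
    rw [key]
    field_simp
  exact eq_two_pow_sub_of_mul_two_pow_eq (by exact_mod_cast hdim)

theorem stabiliser_codespace_dimension (m n : ℕ)
    (gens : Fin n → (Matrix (QIdx m) (QIdx m) ℂ)ˣ)
    (hpauli : ∀ i, gens i ∈ PauliGroup m)
    (hcomm : ∀ i j, gens i * gens j = gens j * gens i)
    (hsa : ∀ i, ((gens i : Matrix (QIdx m) (QIdx m) ℂ))ᴴ = gens i)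
    (hsq : ∀ i, gens i * gens i = 1)
    (hneg : (-1 : (Matrix (QIdx m) (QIdx m) ℂ)ˣ) ∉ Subgroup.closure (Set.range gens))
    (hindep : ∀ i : Fin n,
      gens i ∉ Subgroup.closure (gens '' {j | j ≠ i})) :
    Module.finrank ℂ
      ↥(⨅ g ∈ Subgroup.closure (Set.range gens),
          LinearMap.eqLocus ((g : Matrix (QIdx m) (QIdx m) ℂ)).mulVecLin LinearMap.id)
      = 2 ^ (m - n) :=
  stabiliser_codespace_dimension_general m n gens hpauli hcomm hsq hneg hindep
end

section
/- Let (T, C, D, ν): (H₁,S₁) → (H₂,S₂) and (T′, C′, D′, ν′): (H₂,S₂) → (H₃,S₃) be corrections of stabiliser codes. Then the data T″ = T ∘ T′, C″ = ⟨C, ν⁻¹(C′)⟩, D″ = ν⁻¹(D′) and ν″ = ν′ ∘ (ν restricted to D″) is a correction (H₁,S₁) → (H₃,S₃); in particular ⟨C″, D″⟩ = S₁ and T″ induces an isomorphism H₃ ≅ H₁^{C″}. -/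
/-!
Pulling `C' ⊔ D' = S₂` back along `ν` gives `ν⁻¹(C') ⊔ ν⁻¹(D') = D`, so `C″ ⊔ D″ = C ⊔ D = S₁`.
An element `d ∈ ν⁻¹(C')` acts on `T(T' x)` as `T(ν(d) T' x) = T(T' x)`, so `T ∘ T'` lands in
`H₁^{C″}`. Conversely a `C″`-invariant vector is `T x` with `x` fixed by `C'`, since `T` is
injective and intertwines `d` with `ν(d)`; hence `x` lies in the image of `T'`.
-/

open Function

namespace Subgroup

variable {G N : Type*} [Group G] [Group N]

theorem comap_sup_comap_eq_top_of_sup_eq_range {f : G →* N} {A B : Subgroup N}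
    (hAB : A ⊔ B = f.range) : A.comap f ⊔ B.comap f = ⊤ := by
  rw [comap_sup_eq_of_le_range f (hAB ▸ le_sup_left) (hAB ▸ le_sup_right), hAB,
    MonoidHom.comap_range_self]

theorem range_subtype_comp_mulEquiv {S : Subgroup N} (e : G ≃* S) :
    (S.subtype.comp e.toMonoidHom).range = S := by
  rw [MonoidHom.range_comp, MonoidHom.range_eq_top.2 e.surjective, ← MonoidHom.range_eq_map,
    range_subtype]

end Subgroup

section Intertwining

variable {G₁ G₂ X₁ X₂ X₃ : Type*} [Group G₁] [Group G₂] [MulAction G₁ X₁] [MulAction G₂ X₂]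
  {C D : Subgroup G₁} {C' : Subgroup G₂} (φ : D →* G₂) {T : X₂ → X₁} {T' : X₃ → X₂}

theorem smul_comp_eq_self_of_mem_sup_map_comap
    (hTC : ∀ g ∈ C, ∀ x, g • T x = T x) (hTφ : ∀ (d : D) x, (d : G₁) • T x = T (φ d • x))
    (hTC' : ∀ g ∈ C', ∀ x, g • T' x = T' x) :
    ∀ g ∈ C ⊔ (C'.comap φ).map D.subtype, ∀ x, g • T (T' x) = T (T' x) := by
  suffices C ⊔ (C'.comap φ).map D.subtype ≤ fixingSubgroup G₁ (Set.range (T ∘ T')) by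
    exact fun g hg x => (mem_fixingSubgroup_iff G₁).1 (this hg) _ ⟨x, rfl⟩
  refine sup_le (fun g hg => ?_) (Subgroup.map_le_iff_le_comap.2 fun d hd => ?_)
  · rw [mem_fixingSubgroup_iff]
    rintro _ ⟨x, rfl⟩
    exact hTC g hg (T' x)
  · rw [Subgroup.mem_comap, mem_fixingSubgroup_iff]
    rintro _ ⟨x, rfl⟩
    exact (hTφ d (T' x)).trans (congrArg T (hTC' _ hd x))

theorem exists_comp_eq_of_forall_smul_eq (hC' : C' ≤ φ.range) (hT : Injective T)
    (hTsurj : ∀ y, (∀ g ∈ C, g • y = y) → ∃ x, T x = y)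
    (hTφ : ∀ (d : D) x, (d : G₁) • T x = T (φ d • x))
    (hTsurj' : ∀ y, (∀ g ∈ C', g • y = y) → ∃ x, T' x = y) :
    ∀ y, (∀ g ∈ C ⊔ (C'.comap φ).map D.subtype, g • y = y) → ∃ x, T (T' x) = y := by
  intro y hy
  obtain ⟨x, rfl⟩ := hTsurj y fun g hg => hy g (Subgroup.mem_sup_left hg)
  have hx : ∀ g ∈ C', g • x = x := by
    rintro _ hg
    obtain ⟨d, rfl⟩ := hC' hg
    exact hT ((hTφ d x).symm.trans (hy d (Subgroup.mem_sup_right ⟨d, hg, rfl⟩)))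
  obtain ⟨x', rfl⟩ := hTsurj' x hx
  exact ⟨x', rfl⟩

end Intertwining

theorem correction_composition_general
    {H1 H2 H3 : Type*}
    [NormedAddCommGroup H1] [InnerProductSpace ℂ H1] [FiniteDimensional ℂ H1]
    [NormedAddCommGroup H2] [InnerProductSpace ℂ H2] [FiniteDimensional ℂ H2]
    [NormedAddCommGroup H3] [InnerProductSpace ℂ H3] [FiniteDimensional ℂ H3]
    (S1 : Subgroup (unitary (H1 →L[ℂ] H1)))
    (S2 : Subgroup (unitary (H2 →L[ℂ] H2)))
    (S3 : Subgroup (unitary (H3 →L[ℂ] H3)))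
    -- the first correction (T, C, D, ν) : (H1,S1) → (H2,S2)
    (T : H2 →ₗᵢ[ℂ] H1)
    (C D : Subgroup (unitary (H1 →L[ℂ] H1)))
    (hCD : C ⊔ D = S1)
    (ν : D ≃* S2)
    (hTC : ∀ g ∈ C, ∀ x : H2, ((g : unitary (H1 →L[ℂ] H1)) : H1 →L[ℂ] H1) (T x) = T x)
    (hTsurj : ∀ y : H1,
      (∀ g ∈ C, ((g : unitary (H1 →L[ℂ] H1)) : H1 →L[ℂ] H1) y = y) → ∃ x : H2, T x = y)
    (hTν : ∀ (d : D) (x : H2),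
      (((d : unitary (H1 →L[ℂ] H1))) : H1 →L[ℂ] H1) (T x)
        = T ((((ν d : S2) : unitary (H2 →L[ℂ] H2)) : H2 →L[ℂ] H2) x))
    -- the second correction (T', C', D', ν') : (H2,S2) → (H3,S3)
    (T' : H3 →ₗᵢ[ℂ] H2)
    (C' D' : Subgroup (unitary (H2 →L[ℂ] H2)))
    (hC' : C' ≤ S2) (hCD' : C' ⊔ D' = S2)
    (ν' : D' ≃* S3)
    (hTC' : ∀ g ∈ C', ∀ x : H3, ((g : unitary (H2 →L[ℂ] H2)) : H2 →L[ℂ] H2) (T' x) = T' x)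
    (hTsurj' : ∀ y : H2,
      (∀ g ∈ C', ((g : unitary (H2 →L[ℂ] H2)) : H2 →L[ℂ] H2) y = y) → ∃ x : H3, T' x = y)
    (hTν' : ∀ (d : D') (x : H3),
      (((d : unitary (H2 →L[ℂ] H2))) : H2 →L[ℂ] H2) (T' x)
        = T' ((((ν' d : S3) : unitary (H3 →L[ℂ] H3)) : H3 →L[ℂ] H3) x)) :
    -- the composite data (T ∘ T', C″ = ⟨C, ν⁻¹(C')⟩, D″ = ν⁻¹(D'), ν″ = ν' ∘ ν) is a correction
    ((C ⊔ Subgroup.map D.subtype (Subgroup.comap (S2.subtype.comp ν.toMonoidHom) C')) ⊔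
        Subgroup.map D.subtype (Subgroup.comap (S2.subtype.comp ν.toMonoidHom) D') = S1) ∧
    (∀ g ∈ C ⊔ Subgroup.map D.subtype (Subgroup.comap (S2.subtype.comp ν.toMonoidHom) C'),
      ∀ x : H3, ((g : unitary (H1 →L[ℂ] H1)) : H1 →L[ℂ] H1) (T (T' x)) = T (T' x)) ∧
    (∀ y : H1,
      (∀ g ∈ C ⊔ Subgroup.map D.subtype (Subgroup.comap (S2.subtype.comp ν.toMonoidHom) C'),
        ((g : unitary (H1 →L[ℂ] H1)) : H1 →L[ℂ] H1) y = y) →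
      ∃ x : H3, T (T' x) = y) ∧
    (∀ (d : D) (hd : (S2.subtype.comp ν.toMonoidHom) d ∈ D') (x : H3),
      ((d : unitary (H1 →L[ℂ] H1)) : H1 →L[ℂ] H1) (T (T' x))
        = T (T' ((((ν' ⟨(S2.subtype.comp ν.toMonoidHom) d, hd⟩ : S3) :
              unitary (H3 →L[ℂ] H3)) : H3 →L[ℂ] H3) x))) := by
  have hφ := Subgroup.range_subtype_comp_mulEquiv ν
  refine ⟨?_, smul_comp_eq_self_of_mem_sup_map_comap _ hTC hTν hTC',
    exists_comp_eq_of_forall_smul_eq _ (hC'.trans hφ.ge) T.injective hTsurj hTν hTsurj',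
    fun d hd x => (hTν d (T' x)).trans (congrArg T (hTν' ⟨_, hd⟩ x))⟩
  rw [sup_assoc, ← Subgroup.map_sup,
    Subgroup.comap_sup_comap_eq_top_of_sup_eq_range (hCD'.trans hφ.symm),
    ← MonoidHom.range_eq_map, Subgroup.range_subtype, hCD]

/-- Composition of corrections of stabiliser codes. A stabiliser code is a pair `(H, S)` of a
finite-dimensional complex Hilbert space `H` and a subgroup `S` of its unitary group; a
correction `(H₁,S₁) → (H₂,S₂)` is data `(T, C, D, ν)` as in the hypotheses below. The composite
data `(T ∘ T', ⟨C, ν⁻¹(C')⟩, ν⁻¹(D'), ν' ∘ ν)` is again a correction: in particular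
`⟨C″, D″⟩ = S₁`, the image of `T ∘ T'` consists of `C″`-invariant vectors, `T ∘ T'` induces an
isomorphism of `H₃` onto `H₁^{C″}`, and conjugation by it carries `ν″(d)` to `d`. -/
theorem correction_composition
    {H1 H2 H3 : Type*}
    [NormedAddCommGroup H1] [InnerProductSpace ℂ H1] [FiniteDimensional ℂ H1]
    [NormedAddCommGroup H2] [InnerProductSpace ℂ H2] [FiniteDimensional ℂ H2]
    [NormedAddCommGroup H3] [InnerProductSpace ℂ H3] [FiniteDimensional ℂ H3]
    (S1 : Subgroup (unitary (H1 →L[ℂ] H1)))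
    (S2 : Subgroup (unitary (H2 →L[ℂ] H2)))
    (S3 : Subgroup (unitary (H3 →L[ℂ] H3)))
    -- the first correction (T, C, D, ν) : (H1,S1) → (H2,S2)
    (T : H2 →ₗᵢ[ℂ] H1)
    (C D : Subgroup (unitary (H1 →L[ℂ] H1)))
    (hC : C ≤ S1) (hD : D ≤ S1) (hCD : C ⊔ D = S1)
    (ν : D ≃* S2)
    (hTC : ∀ g ∈ C, ∀ x : H2, ((g : unitary (H1 →L[ℂ] H1)) : H1 →L[ℂ] H1) (T x) = T x)
    (hTsurj : ∀ y : H1,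
      (∀ g ∈ C, ((g : unitary (H1 →L[ℂ] H1)) : H1 →L[ℂ] H1) y = y) → ∃ x : H2, T x = y)
    (hTν : ∀ (d : D) (x : H2),
      (((d : unitary (H1 →L[ℂ] H1))) : H1 →L[ℂ] H1) (T x)
        = T ((((ν d : S2) : unitary (H2 →L[ℂ] H2)) : H2 →L[ℂ] H2) x))
    -- the second correction (T', C', D', ν') : (H2,S2) → (H3,S3)
    (T' : H3 →ₗᵢ[ℂ] H2)
    (C' D' : Subgroup (unitary (H2 →L[ℂ] H2)))
    (hC' : C' ≤ S2) (hD' : D' ≤ S2) (hCD' : C' ⊔ D' = S2)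
    (ν' : D' ≃* S3)
    (hTC' : ∀ g ∈ C', ∀ x : H3, ((g : unitary (H2 →L[ℂ] H2)) : H2 →L[ℂ] H2) (T' x) = T' x)
    (hTsurj' : ∀ y : H2,
      (∀ g ∈ C', ((g : unitary (H2 →L[ℂ] H2)) : H2 →L[ℂ] H2) y = y) → ∃ x : H3, T' x = y)
    (hTν' : ∀ (d : D') (x : H3),
      (((d : unitary (H2 →L[ℂ] H2))) : H2 →L[ℂ] H2) (T' x)
        = T' ((((ν' d : S3) : unitary (H3 →L[ℂ] H3)) : H3 →L[ℂ] H3) x)) :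
    -- the composite data (T ∘ T', C″ = ⟨C, ν⁻¹(C')⟩, D″ = ν⁻¹(D'), ν″ = ν' ∘ ν) is a correction
    ((C ⊔ Subgroup.map D.subtype (Subgroup.comap (S2.subtype.comp ν.toMonoidHom) C')) ⊔
        Subgroup.map D.subtype (Subgroup.comap (S2.subtype.comp ν.toMonoidHom) D') = S1) ∧
    (∀ g ∈ C ⊔ Subgroup.map D.subtype (Subgroup.comap (S2.subtype.comp ν.toMonoidHom) C'),
      ∀ x : H3, ((g : unitary (H1 →L[ℂ] H1)) : H1 →L[ℂ] H1) (T (T' x)) = T (T' x)) ∧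
    (∀ y : H1,
      (∀ g ∈ C ⊔ Subgroup.map D.subtype (Subgroup.comap (S2.subtype.comp ν.toMonoidHom) C'),
        ((g : unitary (H1 →L[ℂ] H1)) : H1 →L[ℂ] H1) y = y) →
      ∃ x : H3, T (T' x) = y) ∧
    (∀ (d : D) (hd : (S2.subtype.comp ν.toMonoidHom) d ∈ D') (x : H3),
      ((d : unitary (H1 →L[ℂ] H1)) : H1 →L[ℂ] H1) (T (T' x))
        = T (T' ((((ν' ⟨(S2.subtype.comp ν.toMonoidHom) d, hd⟩ : S3) :
              unitary (H3 →L[ℂ] H3)) : H3 →L[ℂ] H3) x))) :=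
  correction_composition_general S1 S2 S3 T C D hCD ν hTC hTsurj hTν T' C' D' hC' hCD' ν' hTC'
    hTsurj' hTν'
end
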